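/- arXiv:2311.16188 — 2 statements merged into one kernel-verified Lean document; each statement's English description precedes it below -/
import Mathlib

section
/- In the proof of LC-invariance of foliage-equivalence, the following case holds: let G be a finite simple graph, let v, w be twins in G (distinct vertices with N_v \ {w} = N_w \ {v} ≠ ∅) that are adjacent in G. Then in the local complement τ_v(G), the vertex w is a leaf whose unique neighbor (axil) is v. -/
variable {V : Type*}

/-- Local complementation `τ_a(G)`: toggle every edge between distinct neighbors of `a`. -/
def lcomp (G : SimpleGraph V) (a : V) : SimpleGraph V where
  Adj x y := (G.Adj x y ∧ ¬(x ≠ y ∧ G.Adj a x ∧ G.Adj a y)) ∨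
             ((x ≠ y ∧ G.Adj a x ∧ G.Adj a y) ∧ ¬ G.Adj x y)
  symm := by
    constructor
    rintro x y (⟨h1, h2⟩ | ⟨⟨hne, hx, hy⟩, h2⟩)
    · exact Or.inl ⟨h1.symm, fun h => h2 ⟨h.1.symm, h.2.2, h.2.1⟩⟩
    · exact Or.inr ⟨⟨hne.symm, hy, hx⟩, fun h => h2 h.symm⟩
  loopless := by
    constructor
    rintro x (⟨h1, _⟩ | ⟨⟨hne, _, _⟩, _⟩)
    · exact G.irrefl h1
    · exact hne rfl

/-- `(l, a)` is a leaf-axil pair: `l` has degree 1 and its unique neighbor is `a`. -/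
def IsLeafAxil (G : SimpleGraph V) (l a : V) : Prop :=
  G.Adj l a ∧ ∀ x, G.Adj l x → x = a

/-- `v` and `w` are twins: `N_v \ {w} = N_w \ {v} ≠ ∅`. -/
def IsTwin (G : SimpleGraph V) (v w : V) : Prop :=
  v ≠ w ∧ G.neighborSet v \ {w} = G.neighborSet w \ {v} ∧
    (G.neighborSet v \ {w}).Nonempty

/-- Foliage equivalence `v ∼_F w`. -/
def FoliageEq (G : SimpleGraph V) (v w : V) : Prop :=
  v = w ∨ IsLeafAxil G v w ∨ IsLeafAxil G w v ∨ IsTwin G v w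

/-!
Local complementation at `v` leaves the neighbourhood of `v` unchanged and replaces the
neighbourhood of each neighbour `w` of `v` by `(N_w ∆ N_v) \ {w}`. For twins `N_w ∆ N_v ⊆ {v, w}`,
so after `τ_v` the only possible neighbour of `w` is `v`, which stays adjacent to it.
-/

open scoped symmDiff

section

variable {G : SimpleGraph V} {a v w x y : V}

theorem lcomp_adj_iff :
    (lcomp G a).Adj x y ↔ x ≠ y ∧ Xor (G.Adj x y) (G.Adj a x ∧ G.Adj a y) := by
  by_cases hxy : x = y
  · subst hxy
    simp
  · simp only [lcomp, xor_iff_or_and_not_and, ne_eq, hxy, not_false_eq_true, true_and]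
    tauto

theorem lcomp_adj_self_left : (lcomp G a).Adj a x ↔ G.Adj a x := by
  simp only [lcomp_adj_iff, G.irrefl, false_and, xor_def, not_false_eq_true, and_true, or_false]
  exact ⟨And.right, fun h => ⟨G.ne_of_adj h, h⟩⟩

theorem lcomp_adj_of_adj (h : G.Adj a w) :
    (lcomp G a).Adj w x ↔ w ≠ x ∧ Xor (G.Adj w x) (G.Adj a x) := by
  simp [lcomp_adj_iff, h]

theorem lcomp_neighborSet_of_adj (h : G.Adj a w) :
    (lcomp G a).neighborSet w = (G.neighborSet w ∆ G.neighborSet a) \ {w} := by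
  ext x
  simp only [SimpleGraph.mem_neighborSet, lcomp_adj_of_adj h, Set.mem_sdiff, Set.mem_symmDiff,
    Set.mem_singleton_iff, xor_def]
  tauto

theorem IsTwin.symmDiff_neighborSet_subset (h : IsTwin G v w) :
    G.neighborSet w ∆ G.neighborSet v ⊆ {v, w} := by
  intro x hx
  by_contra hxvw
  obtain ⟨hxv, hxw⟩ : x ≠ v ∧ x ≠ w := by simpa [not_or] using hxvw
  have hiff : x ∈ G.neighborSet v ↔ x ∈ G.neighborSet w := by
    simpa [hxv, hxw] using Set.ext_iff.1 h.2.1 x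
  rw [Set.mem_symmDiff, hiff] at hx
  tauto

end

theorem twin_adj_lc_leafAxil_general {V : Type*} (G : SimpleGraph V) (v w : V)
    (htwin : IsTwin G v w) (hadj : G.Adj v w) :
    IsLeafAxil (lcomp G v) w v := by
  refine ⟨(lcomp_adj_self_left.2 hadj).symm, fun x hx => ?_⟩
  rw [← SimpleGraph.mem_neighborSet, lcomp_neighborSet_of_adj hadj] at hx
  exact (htwin.symmDiff_neighborSet_subset hx.1).resolve_right hx.2

/-- adjacent twins `v, w` become a leaf-axil pair `(w, v)` after `τ_v`. -/
theorem twin_adj_lc_leafAxil {V : Type*} [Fintype V] (G : SimpleGraph V) (v w : V)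
    (htwin : IsTwin G v w) (hadj : G.Adj v w) :
    IsLeafAxil (lcomp G v) w v :=
  twin_adj_lc_leafAxil_general G v w htwin hadj
end

section
/- In the proof of LC-invariance of foliage-equivalence, the following case holds: let G be a finite simple graph and let (v,w) be a leaf-axil pair in G (v has degree 1 with unique neighbor w). Then in the local complement τ_w(G), the vertices v and w are twins, i.e., the neighborhood of v minus w equals the neighborhood of w minus v and this set is nonempty (provided w has degree at least 2 in G). -/
variable {V : Type*}

section LocalComplement

variable {G : SimpleGraph V} {a l x y : V}

theorem lcomp_adj :
    (lcomp G a).Adj x y ↔ Xor (G.Adj x y) (x ≠ y ∧ G.Adj a x ∧ G.Adj a y) :=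
  Iff.rfl

@[simp]
theorem neighborSet_lcomp_self : (lcomp G a).neighborSet a = G.neighborSet a := by
  ext x
  simp [lcomp_adj, Xor]

theorem IsLeafAxil.neighborSet_lcomp (h : IsLeafAxil G l a) :
    (lcomp G a).neighborSet l = insert a (G.neighborSet a \ {l}) := by
  obtain ⟨hla, hleaf⟩ := h
  ext x
  by_cases hxa : x = a
  · subst hxa
    simp [lcomp_adj, Xor, hla]
  · have hlx : ¬G.Adj l x := fun hlx => hxa (hleaf x hlx)
    simp [lcomp_adj, Xor, hlx, hxa, hla.symm, and_comm, eq_comm]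

end LocalComplement

theorem leafAxil_lc_twin_general {V : Type*} (G : SimpleGraph V) (v w : V)
    (h : IsLeafAxil G v w) (hdeg : 2 ≤ (G.neighborSet w).ncard) :
    IsTwin (lcomp G w) v w := by
  have hN : (lcomp G w).neighborSet v \ {w} = G.neighborSet w \ {v} := by
    rw [h.neighborSet_lcomp, Set.insert_sdiff_of_mem _ (Set.mem_singleton w), sdiff_sdiff_comm,
      Set.sdiff_singleton_eq_self G.notMem_neighborSet_self]
  refine ⟨h.1.ne, by rw [hN, neighborSet_lcomp_self], ?_⟩
  obtain ⟨x, hx, hxv⟩ := (Set.one_lt_ncard_iff_nontrivial_and_finite.1 hdeg).1.exists_ne v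
  exact hN ▸ ⟨x, hx, hxv⟩

/-- a leaf-axil pair `(v, w)` (with `w` of degree at least 2)
becomes a twin pair after `τ_w`. -/
theorem leafAxil_lc_twin {V : Type*} [Fintype V] (G : SimpleGraph V) (v w : V)
    (h : IsLeafAxil G v w) (hdeg : 2 ≤ (G.neighborSet w).ncard) :
    IsTwin (lcomp G w) v w :=
  leafAxil_lc_twin_general G v w h hdeg
end
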